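/- arXiv:0903.1969 — 3 statements merged into one kernel-verified Lean document; each statement's English description precedes it below -/
import Mathlib

section
/- Let T: [0,p] → [0,p] (p > 0 in ℝⁿ, componentwise) be continuous, C¹ on (0,p), with DT(x) having all entries strictly positive for 0 < x < p, DT antitone in the sense DT(y) ⪇ DT(x) for 0 < x < y < p, Tp < p, and T0 ⪈ 0. Then T has a unique fixed point q ∈ [0,p], q lies in the open box (0,p), and Tⁿx → q as n → ∞ for every x ∈ [0,p]. -/
/-!
Positivity of the Jacobian makes `T` monotone on `[0,p]` by the mean value theorem, and strictly
monotone below `p`: on a segment below `y` the Jacobian dominates `J w` for any `w` above `y`.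
Hence the orbits of `p` and `0` are monotone, converge to fixed points `m ≤ q`, and squeeze every
other orbit. `T p < p` and `T 0 ⪈ 0` push each fixed point into the open box. As `J` is antitone,
`T` is concave on rays, so `T (θ • q) ≥ θ • q + (1 - θ) • T 0`; for the largest `θ` with
`θ • q ≤ m` this contradicts strict monotonicity unless `m = q`.
-/

open Set Filter Topology

section Iterate

variable {α : Type*} {f : α → α} {s : Set α}

theorem MonotoneOn.iterate [Preorder α] (hf : MonotoneOn f s) (hs : MapsTo f s s) (n : ℕ) :
    MonotoneOn f^[n] s := by
  induction n with
  | zero => exact monotoneOn_id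
  | succ n ih => rw [Function.iterate_succ]; exact ih.comp hf hs

theorem MonotoneOn.antitone_iterate_of_map_le [Preorder α] (hf : MonotoneOn f s)
    (hs : MapsTo f s s) {x : α} (hx : x ∈ s) (hfx : f x ≤ x) : Antitone fun n => f^[n] x :=
  antitone_nat_of_succ_le fun n => by
    rw [Function.iterate_succ_apply]; exact hf.iterate hs n (hs hx) hx hfx

theorem MonotoneOn.monotone_iterate_of_le_map [Preorder α] (hf : MonotoneOn f s)
    (hs : MapsTo f s s) {x : α} (hx : x ∈ s) (hfx : x ≤ f x) : Monotone fun n => f^[n] x :=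
  monotone_nat_of_le_succ fun n => by
    rw [Function.iterate_succ_apply]; exact hf.iterate hs n hx (hs hx) hfx

theorem isFixedPt_of_tendsto_iterate_of_continuousOn [TopologicalSpace α] [T2Space α]
    (hs : IsClosed s) (hmaps : MapsTo f s s) (hf : ContinuousOn f s) {x y : α} (hx : x ∈ s)
    (hy : Tendsto (fun n => f^[n] x) atTop (𝓝 y)) : y ∈ s ∧ Function.IsFixedPt f y := by
  have horbit : ∀ n, f^[n] x ∈ s := fun n => hmaps.iterate n hx
  have hys : y ∈ s := hs.mem_of_tendsto hy (Eventually.of_forall horbit)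
  refine ⟨hys, tendsto_nhds_unique ((tendsto_add_atTop_iff_nat 1).1 ?_) hy⟩
  simp only [Function.iterate_succ' f]
  exact (hf y hys).tendsto.comp (tendsto_nhdsWithin_iff.2 ⟨hy, Eventually.of_forall horbit⟩)

end Iterate

section OpenBox

variable {ι : Type*}

def openBox (p : ι → ℝ) : Set (ι → ℝ) := {x | ∀ i, 0 < x i ∧ x i < p i}

variable {p : ι → ℝ}

theorem openBox_eq_pi (p : ι → ℝ) : openBox p = univ.pi fun i => Ioo 0 (p i) := by
  ext x; simp [openBox]

theorem isOpen_openBox [Finite ι] (p : ι → ℝ) : IsOpen (openBox p) := by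
  rw [openBox_eq_pi]; exact isOpen_set_pi finite_univ fun i _ => isOpen_Ioo

theorem convex_openBox (p : ι → ℝ) : Convex ℝ (openBox p) := by
  rw [openBox_eq_pi]; exact convex_pi fun i _ => convex_Ioo 0 (p i)

theorem openBox_subset_Icc (p : ι → ℝ) : openBox p ⊆ Icc 0 p :=
  fun _ hx => ⟨fun i => (hx i).1.le, fun i => (hx i).2.le⟩

theorem add_smul_sub_mem_openBox {x c : ι → ℝ} (hx : x ∈ Icc 0 p) (hc : c ∈ openBox p)
    {ε : ℝ} (hε : ε ∈ Ioc 0 1) : x + ε • (c - x) ∈ openBox p := by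
  intro i
  have := hx.1 i; have := hx.2 i; have := hc i; have := hε.1; have := hε.2
  simp only [Pi.add_apply, Pi.smul_apply, Pi.sub_apply, smul_eq_mul, Pi.zero_apply] at *
  constructor <;> nlinarith

theorem half_mem_openBox (hp : ∀ i, 0 < p i) : (fun i => p i / 2) ∈ openBox p :=
  fun i => ⟨by linarith [hp i], by linarith [hp i]⟩

theorem exists_gt_mem_openBox {a : ι → ℝ} (ha : a ∈ openBox p) :
    ∃ w ∈ openBox p, ∀ i, a i < w i :=
  ⟨fun i => (a i + p i) / 2, fun i => ⟨by linarith [ha i], by linarith [ha i]⟩,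
    fun i => by linarith [ha i]⟩

theorem tendsto_apply_add_smul_sub {T : (ι → ℝ) → ι → ℝ} (hcont : ContinuousOn T (Icc 0 p))
    {x c : ι → ℝ} (hx : x ∈ Icc 0 p) (hc : c ∈ openBox p) :
    Tendsto (fun ε : ℝ => T (x + ε • (c - x))) (𝓝[>] 0) (𝓝 (T x)) := by
  have hline : Tendsto (fun ε : ℝ => x + ε • (c - x)) (𝓝[>] 0) (𝓝[Icc 0 p] x) := by
    refine tendsto_nhdsWithin_iff.2 ⟨?_, ?_⟩
    · refine Tendsto.mono_left ?_ nhdsWithin_le_nhds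
      simpa using ((continuous_id.smul continuous_const).const_add x).tendsto' (0 : ℝ) _ rfl
    · filter_upwards [Ioo_mem_nhdsGT one_pos] with ε hε
      exact openBox_subset_Icc p (add_smul_sub_mem_openBox hx hc (Ioo_subset_Ioc_self hε))
  exact (hcont x hx).tendsto.comp hline

end OpenBox

section Jacobian

variable {ι : Type*} [Fintype ι]

theorem hasFDerivAt_mulVecLin_of_hasDerivAt_update [DecidableEq ι] {T : (ι → ℝ) → ι → ℝ}
    {z : ι → ℝ} {M : Matrix ι ι ℝ} (hT : DifferentiableAt ℝ T z)
    (hM : ∀ j, HasDerivAt (fun t => T (Function.update z j t)) (fun i => M i j) (z j)) :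
    HasFDerivAt T (LinearMap.toContinuousLinearMap (Matrix.mulVecLin M)) z := by
  convert hT.hasFDerivAt
  refine ContinuousLinearMap.coe_injective (LinearMap.pi_ext fun j t => ?_)
  have hF : HasFDerivAt T (fderiv ℝ T z) (Function.update z j (z j)) := by
    rw [Function.update_eq_self]; exact hT.hasFDerivAt
  have hcol := (hF.comp_hasDerivAt (z j) (hasDerivAt_update z j (z j))).unique (hM j)
  have hsingle : Pi.single j t = t • (Pi.single j 1 : ι → ℝ) := by
    ext k; by_cases h : k = j <;> simp [h]
  ext i
  simp [hsingle, hcol, Matrix.mulVec_single]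

def HasJacobianOn (T : (ι → ℝ) → ι → ℝ) (J : (ι → ℝ) → Matrix ι ι ℝ) (s : Set (ι → ℝ)) :
    Prop :=
  ∀ z ∈ s, HasFDerivAt T (LinearMap.toContinuousLinearMap (Matrix.mulVecLin (J z))) z

variable {p : ι → ℝ} {T : (ι → ℝ) → ι → ℝ} {J : (ι → ℝ) → Matrix ι ι ℝ}

theorem hasDerivAt_apply_add_smul
    (hT : HasJacobianOn T J (openBox p))
    {x v : ι → ℝ} {s : ℝ} (hs : x + s • v ∈ openBox p) (i : ι) :
    HasDerivAt (fun s : ℝ => T (x + s • v) i) (J (x + s • v) i ⬝ᵥ v) s := by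
  have hline : HasDerivAt (fun s : ℝ => x + s • v) v s := by
    simpa using ((hasDerivAt_id s).smul_const v).const_add x
  exact hasDerivAt_pi.1 ((hT _ hs).comp_hasDerivAt s hline) i

theorem dotProduct_sub_le_sub_of_le_jacobian
    (hT : HasJacobianOn T J (openBox p))
    {x y : ι → ℝ} (hx : x ∈ openBox p) (hy : y ∈ openBox p) (hxy : x ≤ y) (i : ι) {K : ι → ℝ}
    (hK : ∀ z ∈ openBox p, z ≤ y → K ≤ J z i) : K ⬝ᵥ (y - x) ≤ T y i - T x i := by
  have hseg : ∀ s ∈ Icc (0 : ℝ) 1, x + s • (y - x) ∈ openBox p := fun s hs =>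
    (convex_openBox p).add_smul_sub_mem hx hy hs
  have hder : ∀ s ∈ Icc (0 : ℝ) 1, HasDerivAt (fun s : ℝ => T (x + s • (y - x)) i)
      (J (x + s • (y - x)) i ⬝ᵥ (y - x)) s := fun s hs =>
    hasDerivAt_apply_add_smul hT (hseg s hs) i
  obtain ⟨s, hs, hslope⟩ := exists_hasDerivAt_eq_slope _ _ one_pos
    (fun s hs => (hder s hs).continuousAt.continuousWithinAt)
    (fun s hs => hder s (Ioo_subset_Icc_self hs))
  have hsy : x + s • (y - x) ≤ y := fun j => by
    have := hxy j; have := hs.1; have := hs.2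
    simp only [Pi.add_apply, Pi.smul_apply, Pi.sub_apply, smul_eq_mul]
    nlinarith
  calc K ⬝ᵥ (y - x) ≤ J (x + s • (y - x)) i ⬝ᵥ (y - x) :=
        dotProduct_le_dotProduct_of_nonneg_right (hK _ (hseg s (Ioo_subset_Icc_self hs)) hsy)
          (sub_nonneg.2 hxy)
    _ = T y i - T x i := by simpa using hslope

theorem dotProduct_sub_le_sub_of_le_jacobian_Icc (hcont : ContinuousOn T (Icc 0 p))
    (hT : HasJacobianOn T J (openBox p))
    {x y c : ι → ℝ} (hx : x ∈ Icc 0 p) (hy : y ∈ Icc 0 p) (hxy : x ≤ y) (hc : c ∈ openBox p)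
    (i : ι) {K : ι → ℝ} (hK : ∀ z ∈ openBox p, z ≤ y ⊔ c → K ≤ J z i) :
    K ⬝ᵥ (y - x) ≤ T y i - T x i := by
  -- contract `x` and `y` towards `c` by the factor `1 - ε` and let `ε → 0`
  have hlim : Tendsto (fun ε : ℝ => T (y + ε • (c - y)) i - T (x + ε • (c - x)) i) (𝓝[>] 0)
      (𝓝 (T y i - T x i)) :=
    ((continuous_apply i).tendsto _ |>.comp (tendsto_apply_add_smul_sub hcont hy hc)).sub
      ((continuous_apply i).tendsto _ |>.comp (tendsto_apply_add_smul_sub hcont hx hc))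
  have hlim' : Tendsto (fun ε : ℝ => (1 - ε) * K ⬝ᵥ (y - x)) (𝓝[>] 0) (𝓝 (K ⬝ᵥ (y - x))) := by
    have : ContinuousAt (fun ε : ℝ => (1 - ε) * K ⬝ᵥ (y - x)) 0 := by fun_prop
    simpa using this.tendsto.mono_left nhdsWithin_le_nhds
  refine le_of_tendsto_of_tendsto hlim' hlim ?_
  filter_upwards [Ioo_mem_nhdsGT one_pos] with ε hε
  have hε' : ε ∈ Ioc (0 : ℝ) 1 := Ioo_subset_Ioc_self hε
  have hdiff : (y + ε • (c - y)) - (x + ε • (c - x)) = (1 - ε) • (y - x) := by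
    ext j; simp only [Pi.add_apply, Pi.smul_apply, Pi.sub_apply, smul_eq_mul]; ring
  have hle : x + ε • (c - x) ≤ y + ε • (c - y) := by
    rw [← sub_nonneg, hdiff]; exact smul_nonneg (by linarith [hε.2]) (sub_nonneg.2 hxy)
  have hbound : y + ε • (c - y) ≤ y ⊔ c := fun j => by
    have := hε.1; have := hε.2
    simp only [Pi.add_apply, Pi.smul_apply, Pi.sub_apply, smul_eq_mul, Pi.sup_apply]
    nlinarith [le_sup_left (a := y j) (b := c j), le_sup_right (a := y j) (b := c j)]
  have := dotProduct_sub_le_sub_of_le_jacobian hT (add_smul_sub_mem_openBox hx hc hε')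
    (add_smul_sub_mem_openBox hy hc hε') hle i (K := K)
    (fun z hz hzy => hK z hz (hzy.trans hbound))
  rwa [hdiff, dotProduct_smul, smul_eq_mul] at this

theorem monotoneOn_Icc_of_jacobian_pos (hp : ∀ i, 0 < p i) (hcont : ContinuousOn T (Icc 0 p))
    (hT : HasJacobianOn T J (openBox p))
    (hJpos : ∀ z ∈ openBox p, ∀ i j, 0 < J z i j) : MonotoneOn T (Icc 0 p) := by
  intro x hx y hy hxy i
  have hc := half_mem_openBox hp
  have := dotProduct_sub_le_sub_of_le_jacobian_Icc hcont hT hx hy hxy hc i (K := 0)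
    (fun z hz _ j => (hJpos z hz i j).le)
  simpa only [zero_dotProduct, sub_nonneg] using this

theorem apply_lt_apply_of_le_of_ne (hp : ∀ i, 0 < p i) (hcont : ContinuousOn T (Icc 0 p))
    (hT : HasJacobianOn T J (openBox p))
    (hJpos : ∀ z ∈ openBox p, ∀ i j, 0 < J z i j)
    (hJanti : ∀ x ∈ openBox p, ∀ y ∈ openBox p, (∀ i, x i < y i) → ∀ i j, J y i j ≤ J x i j)
    {x y : ι → ℝ} (hx : x ∈ Icc 0 p) (hy : y ∈ Icc 0 p) (hyp : ∀ i, y i < p i) (hxy : x ≤ y)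
    (hne : x ≠ y) (i : ι) : T x i < T y i := by
  have hc := half_mem_openBox hp
  obtain ⟨w, hw, hyw⟩ := exists_gt_mem_openBox (p := p) (a := y ⊔ fun i => p i / 2)
    fun i => ⟨lt_sup_of_lt_right (hc i).1, sup_lt_iff.2 ⟨hyp i, (hc i).2⟩⟩
  have hbound := dotProduct_sub_le_sub_of_le_jacobian_Icc hcont hT hx hy hxy hc i (K := J w i)
    fun z hz hzy j => hJanti z hz w hw (fun k => (hzy k).trans_lt (hyw k)) i j
  obtain ⟨j, hj⟩ := Function.ne_iff.1 hne
  have hpos : 0 < J w i ⬝ᵥ (y - x) :=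
    Finset.sum_pos' (fun k _ => mul_nonneg (hJpos w hw i k).le (sub_nonneg.2 (hxy k)))
      ⟨j, Finset.mem_univ j, mul_pos (hJpos w hw i j) (sub_pos.2 ((hxy j).lt_of_ne hj))⟩
  linarith

theorem concaveOn_apply_smul (hcont : ContinuousOn T (Icc 0 p))
    (hT : HasJacobianOn T J (openBox p))
    (hJanti : ∀ x ∈ openBox p, ∀ y ∈ openBox p, (∀ i, x i < y i) → ∀ i j, J y i j ≤ J x i j)
    {q : ι → ℝ} (hq : q ∈ openBox p) (i : ι) :
    ConcaveOn ℝ (Icc 0 1) fun s : ℝ => T (s • q) i := by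
  have h0 : (0 : ι → ℝ) ∈ Icc 0 p := left_mem_Icc.2 fun j => ((hq j).1.trans (hq j).2).le
  have hmem : ∀ s ∈ Ioo (0 : ℝ) 1, s • q ∈ openBox p := fun s hs => by
    simpa using add_smul_sub_mem_openBox h0 hq (Ioo_subset_Ioc_self hs)
  have hder : ∀ s ∈ Ioo (0 : ℝ) 1,
      HasDerivAt (fun s : ℝ => T (s • q) i) (J (s • q) i ⬝ᵥ q) s := fun s hs => by
    simpa using hasDerivAt_apply_add_smul hT (x := 0) (v := q) (by simpa using hmem s hs) i
  have hcontf : ContinuousOn (fun s : ℝ => T (s • q) i) (Icc 0 1) :=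
    (continuous_apply i).comp_continuousOn <| hcont.comp
      (continuous_id.smul continuous_const).continuousOn fun s hs =>
        (convex_Icc 0 p).smul_mem_of_zero_mem h0 (openBox_subset_Icc p hq) hs
  refine AntitoneOn.concaveOn_of_deriv (convex_Icc 0 1) hcontf ?_ ?_ <;> rw [interior_Icc]
  · exact fun s hs => (hder s hs).differentiableAt.differentiableWithinAt
  · intro a ha b hb hab
    rw [(hder a ha).deriv, (hder b hb).deriv]
    rcases hab.eq_or_lt with rfl | hlt
    · rfl
    refine dotProduct_le_dotProduct_of_nonneg_right (fun j => ?_) fun j => (hq j).1.le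
    exact hJanti _ (hmem a ha) _ (hmem b hb)
      (fun k => mul_lt_mul_of_pos_right hlt (hq k).1) i j

theorem mem_openBox_of_isFixedPt (hp : ∀ i, 0 < p i) (hcont : ContinuousOn T (Icc 0 p))
    (hT : HasJacobianOn T J (openBox p))
    (hJpos : ∀ z ∈ openBox p, ∀ i j, 0 < J z i j)
    (hJanti : ∀ x ∈ openBox p, ∀ y ∈ openBox p, (∀ i, x i < y i) → ∀ i j, J y i j ≤ J x i j)
    (hTp : ∀ i, T p i < p i) (hT0 : 0 < T 0) {u : ι → ℝ} (hu : u ∈ Icc 0 p)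
    (hfix : Function.IsFixedPt T u) : u ∈ openBox p := by
  have hup : ∀ i, u i < p i := fun i =>
    calc u i = T u i := (congrFun hfix i).symm
      _ ≤ T p i := monotoneOn_Icc_of_jacobian_pos hp hcont hT hJpos hu
          (right_mem_Icc.2 (hu.1.trans hu.2)) hu.2 i
      _ < p i := hTp i
  have h0u : (0 : ι → ℝ) ≠ u := fun h => hT0.ne' (h ▸ hfix)
  intro i
  have := apply_lt_apply_of_le_of_ne hp hcont hT hJpos hJanti
    (left_mem_Icc.2 (hu.1.trans hu.2)) hu hup hu.1 h0u i
  rw [hfix] at this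
  exact ⟨(hT0.le i).trans_lt this, hup i⟩

theorem eq_of_isFixedPt_of_le (hp : ∀ i, 0 < p i) (hcont : ContinuousOn T (Icc 0 p))
    (hT : HasJacobianOn T J (openBox p))
    (hJpos : ∀ z ∈ openBox p, ∀ i j, 0 < J z i j)
    (hJanti : ∀ x ∈ openBox p, ∀ y ∈ openBox p, (∀ i, x i < y i) → ∀ i j, J y i j ≤ J x i j)
    (hT0 : 0 < T 0) {m q : ι → ℝ} (hm : m ∈ openBox p) (hq : q ∈ openBox p)
    (hTm : Function.IsFixedPt T m) (hTq : Function.IsFixedPt T q) (hmq : m ≤ q) : m = q := by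
  by_contra hne
  obtain ⟨i₁, hi₁⟩ : ∃ i, m i < q i := by
    obtain ⟨i, hi⟩ := Function.ne_iff.1 hne
    exact ⟨i, (hmq i).lt_of_ne hi⟩
  obtain ⟨i₀, -, hi₀⟩ := Finset.exists_min_image Finset.univ (fun i => m i / q i)
    ⟨i₁, Finset.mem_univ i₁⟩
  set θ := m i₀ / q i₀
  have hθ0 : 0 < θ := div_pos (hm i₀).1 (hq i₀).1
  have hθ1 : θ < 1 :=
    (hi₀ i₁ (Finset.mem_univ i₁)).trans_lt ((div_lt_one (hq i₁).1).2 hi₁)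
  have hθq : θ • q ≤ m := fun i => (le_div_iff₀ (hq i).1).1 (hi₀ i (Finset.mem_univ i))
  have hθqi₀ : θ * q i₀ = m i₀ := div_mul_cancel₀ _ (hq i₀).1.ne'
  have hchord : ∀ i, θ * q i + (1 - θ) * T 0 i ≤ T (θ • q) i := fun i => by
    have := (concaveOn_apply_smul hcont hT hJanti hq i).2 (left_mem_Icc.2 zero_le_one)
      (right_mem_Icc.2 zero_le_one) (sub_nonneg.2 hθ1.le) hθ0.le (sub_add_cancel 1 θ)
    simp only [smul_eq_mul, mul_zero, mul_one, zero_add, zero_smul, one_smul] at this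
    rw [hTq] at this
    linarith
  have hθq_Icc : θ • q ∈ Icc 0 p :=
    ⟨fun i => mul_nonneg hθ0.le (hq i).1.le, fun i => (hθq i).trans (hm i).2.le⟩
  rcases eq_or_ne (θ • q) m with heq | hne'
  · refine hT0.not_ge fun i => ?_
    have := hchord i
    rw [heq, hTm, ← heq] at this
    simp only [Pi.smul_apply, smul_eq_mul] at this
    show T 0 i ≤ 0
    nlinarith
  · have := apply_lt_apply_of_le_of_ne hp hcont hT hJpos hJanti hθq_Icc
      (openBox_subset_Icc p hm) (fun i => (hm i).2) hθq hne' i₀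
    have := hchord i₀
    have := mul_nonneg (sub_nonneg.2 hθ1.le) (hT0.le i₀)
    rw [hTm] at *
    linarith

end Jacobian

/-- Smith's fixed point theorem for monotone concave maps, case `T 0 ⪈ 0`:
if `T : [0,p] → [0,p]` is continuous, C¹ on the open box `(0,p)` with
entrywise positive Jacobian `J`, the Jacobian is strictly antitone
(`J y ⪇ J x` for `0 < x < y < p` componentwise), `T p < p` and `T 0 ⪈ 0`,
then `T` has a unique fixed point `q` in `[0,p]`, `q` lies in `(0,p)`, and
all orbits of `T` starting in `[0,p]` converge to `q`. -/
theorem stmt_10 (n : ℕ) (p : Fin n → ℝ) (hp : ∀ i, 0 < p i)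
    (T : (Fin n → ℝ) → (Fin n → ℝ))
    (hmaps : ∀ x ∈ Set.Icc 0 p, T x ∈ Set.Icc 0 p)
    (hcont : ContinuousOn T (Set.Icc 0 p))
    (hC1 : ContDiffOn ℝ 1 T {x | ∀ i, 0 < x i ∧ x i < p i})
    (J : (Fin n → ℝ) → Fin n → Fin n → ℝ)
    (hJ : ∀ x, (∀ i, 0 < x i ∧ x i < p i) → ∀ j : Fin n,
      HasDerivAt (fun t => T (Function.update x j t)) (fun i => J x i j) (x j))
    (hJpos : ∀ x, (∀ i, 0 < x i ∧ x i < p i) → ∀ i j, 0 < J x i j)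
    (hJanti : ∀ x y, (∀ i, 0 < x i) → (∀ i, x i < y i) → (∀ i, y i < p i) →
      (∀ i j, J y i j ≤ J x i j) ∧ J y ≠ J x)
    (hTp : ∀ i, T p i < p i)
    (hT0 : (∀ i, 0 ≤ T 0 i) ∧ T 0 ≠ 0) :
    ∃ q ∈ Set.Icc (0 : Fin n → ℝ) p, T q = q ∧ (∀ i, 0 < q i ∧ q i < p i) ∧
      (∀ q' ∈ Set.Icc (0 : Fin n → ℝ) p, T q' = q' → q' = q) ∧
      ∀ x ∈ Set.Icc (0 : Fin n → ℝ) p,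
        Filter.Tendsto (fun k => T^[k] x) Filter.atTop (nhds q) := by
  have hT : HasJacobianOn T J (openBox p) := fun z hz =>
    hasFDerivAt_mulVecLin_of_hasDerivAt_update
      ((hC1.differentiableOn one_ne_zero z hz).differentiableAt ((isOpen_openBox p).mem_nhds hz))
      (hJ z hz)
  have hJanti' : ∀ x ∈ openBox p, ∀ y ∈ openBox p, (∀ i, x i < y i) → ∀ i j, J y i j ≤ J x i j :=
    fun x hx y hy hxy => (hJanti x y (fun i => (hx i).1) hxy fun i => (hy i).2).1
  have hT0' : 0 < T 0 := lt_of_le_of_ne (fun i => hT0.1 i) hT0.2.symm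
  have hmaps' : MapsTo T (Icc 0 p) (Icc 0 p) := fun x hx => hmaps x hx
  have hmono := monotoneOn_Icc_of_jacobian_pos hp hcont hT hJpos
  have h0 : (0 : Fin n → ℝ) ∈ Icc 0 p := left_mem_Icc.2 fun i => (hp i).le
  have hp' : p ∈ Icc 0 p := right_mem_Icc.2 fun i => (hp i).le
  obtain ⟨q, hqlim⟩ : ∃ q, Tendsto (fun k => T^[k] p) atTop (𝓝 q) :=
    ⟨_, tendsto_atTop_ciInf (hmono.antitone_iterate_of_map_le hmaps' hp' fun i => (hTp i).le)
      ⟨0, forall_mem_range.2 fun k => (hmaps'.iterate k hp').1⟩⟩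
  obtain ⟨m, hmlim⟩ : ∃ m, Tendsto (fun k => T^[k] 0) atTop (𝓝 m) :=
    ⟨_, tendsto_atTop_ciSup (hmono.monotone_iterate_of_le_map hmaps' h0 hT0'.le)
      ⟨p, forall_mem_range.2 fun k => (hmaps'.iterate k h0).2⟩⟩
  obtain ⟨hq, hTq⟩ :=
    isFixedPt_of_tendsto_iterate_of_continuousOn isClosed_Icc hmaps' hcont hp' hqlim
  obtain ⟨hm, hTm⟩ :=
    isFixedPt_of_tendsto_iterate_of_continuousOn isClosed_Icc hmaps' hcont h0 hmlim
  have hq_box := mem_openBox_of_isFixedPt hp hcont hT hJpos hJanti' hTp hT0' hq hTq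
  have hmq : m = q :=
    eq_of_isFixedPt_of_le hp hcont hT hJpos hJanti' hT0'
      (mem_openBox_of_isFixedPt hp hcont hT hJpos hJanti' hTp hT0' hm hTm) hq_box hTm hTq
      (le_of_tendsto_of_tendsto' hmlim hqlim fun k => hmono.iterate hmaps' k h0 hp' hp'.1)
  have hconv : ∀ x ∈ Icc 0 p, Tendsto (fun k => T^[k] x) atTop (𝓝 q) := fun x hx =>
    tendsto_pi_nhds.2 fun i => tendsto_of_tendsto_of_tendsto_of_le_of_le
      (tendsto_pi_nhds.1 (hmq ▸ hmlim) i) (tendsto_pi_nhds.1 hqlim i)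
      (fun k => hmono.iterate hmaps' k h0 hx hx.1 i)
      (fun k => hmono.iterate hmaps' k hx hp' hx.2 i)
  refine ⟨q, hq, hTq, hq_box, fun u hu hTu => tendsto_nhds_unique ?_ (hconv u hu), hconv⟩
  simp only [Function.iterate_fixed hTu, tendsto_const_nhds]
end

section
/- Let T(x) = φ + α(x)(x - φ) on a wall, where for coordinate j ≠ s we have T_j(x) = φ_j + α_j(x_s)(x_j - φ_j) with α_j(x_s) ∈ (0,1]. Suppose the focal point alignment holds: the focal point φ' of the next domain satisfies φ'_j = φ_j for all j ≠ s'. Then for every j ≠ s', sign(φ'_j - T_j(x)) = sign(φ_j - x_j); i.e., the sign vector Δ_j = sign(φ_j - x_j) is preserved by the transition map in all non-switching directions. -/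
theorem Real.sign_mul_of_pos {a : ℝ} (ha : 0 < a) (r : ℝ) : Real.sign (a * r) = Real.sign r := by
  rcases lt_trichotomy r 0 with hr | rfl | hr
  · rw [Real.sign_of_neg hr, Real.sign_of_neg (mul_neg_of_pos_of_neg ha hr)]
  · rw [mul_zero]
  · rw [Real.sign_of_pos hr, Real.sign_of_pos (mul_pos ha hr)]

theorem Real.sign_sub_homothety {a : ℝ} (ha : 0 < a) (c y : ℝ) :
    Real.sign (c - (c + a * (y - c))) = Real.sign (c - y) := by
  rw [show c - (c + a * (y - c)) = a * (c - y) by ring, Real.sign_mul_of_pos ha]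

/-- Sign preservation under a local transition map with aligned focal points:
if `T j = φ j + α j * (x j - φ j)` with `α j ∈ (0,1]` and the focal point `φ'`
of the next domain satisfies `φ' j = φ j` for all non-switching directions
`j ≠ s'`, then `sign (φ' j - T j) = sign (φ j - x j)` for all `j ≠ s'`. -/
theorem stmt_14 (n : ℕ) (s' : Fin n) (φ φ' x α : Fin n → ℝ)
    (hα : ∀ j, 0 < α j ∧ α j ≤ 1)
    (halign : ∀ j, j ≠ s' → φ' j = φ j) :
    ∀ j, j ≠ s' →
      Real.sign (φ' j - (φ j + α j * (x j - φ j))) = Real.sign (φ j - x j) := by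
  intro j hj
  rw [halign j hj]
  exact Real.sign_sub_homothety (hα j).1 (φ j) (x j)
end

section
/- Let M_1, …, M_ℓ be nonnegative n×n real matrices such that each M_k has positive diagonal entries and its nonzero off-diagonal entries lie only in column s_k, where {s_1, …, s_ℓ} = {1, …, n} and all off-diagonal entries of M_k in column s_k are positive. Then the product M_ℓ⋯M_1 has all entries strictly positive. -/
private lemma stmt_16_aux (n ℓ : ℕ)
    (M : Fin ℓ → Matrix (Fin n) (Fin n) ℝ) (s : Fin ℓ → Fin n)
    (hnonneg : ∀ k i j, 0 ≤ M k i j)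
    (hdiag : ∀ k i, 0 < M k i i)
    (hcol : ∀ k i, i ≠ s k → 0 < M k i (s k)) :
    ∀ k : ℕ, k ≤ ℓ →
      (∀ i j, 0 ≤ (((List.ofFn M).take k).reverse.prod) i j) ∧
      (∀ i, 0 < (((List.ofFn M).take k).reverse.prod) i i) ∧
      (∀ i j, (∃ t : Fin ℓ, (t : ℕ) < k ∧ s t = j) →
        0 < (((List.ofFn M).take k).reverse.prod) i j) := by
  intro k
  induction k with
  | zero =>
    intro _
    simp only [List.take_zero, List.reverse_nil, List.prod_nil]
    refine ⟨?_, ?_, ?_⟩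
    · intro i j
      by_cases h : i = j <;> simp [Matrix.one_apply, h]
    · intro i; simp [Matrix.one_apply]
    · rintro i j ⟨t, ht, -⟩; omega
  | succ k ih =>
    intro hk
    have hkℓ : k < ℓ := hk
    obtain ⟨h0, h1, h2⟩ := ih (le_of_lt hkℓ)
    set P := ((List.ofFn M).take k).reverse.prod with hP
    set t : Fin ℓ := ⟨k, hkℓ⟩ with htdef
    have htake : (List.ofFn M).take (k+1) = (List.ofFn M).take k ++ [M t] := by
      rw [List.take_succ]
      congr 1
      have hlen : k < (List.ofFn M).length := by simpa using hkℓ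
      rw [List.getElem?_eq_getElem hlen]
      simp [List.getElem_ofFn]
      rfl
    have hprod : ((List.ofFn M).take (k+1)).reverse.prod = M t * P := by
      rw [htake, List.reverse_append]
      simp [hP]
    rw [hprod]
    have hentry : ∀ i j, (M t * P) i j = ∑ m, M t i m * P m j := by
      intro i j; rw [Matrix.mul_apply]
    have hnn : ∀ i j, 0 ≤ (M t * P) i j := by
      intro i j; rw [hentry]
      exact Finset.sum_nonneg fun m _ => mul_nonneg (hnonneg t i m) (h0 m j)
    refine ⟨hnn, ?_, ?_⟩
    · intro i
      rw [hentry]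
      refine Finset.sum_pos' (fun m _ => mul_nonneg (hnonneg t i m) (h0 m i)) ?_
      exact ⟨i, Finset.mem_univ i, mul_pos (hdiag t i) (h1 i)⟩
    · rintro i j ⟨u, hu, rfl⟩
      rw [hentry]
      refine Finset.sum_pos' (fun m _ => mul_nonneg (hnonneg t i m) (h0 m (s u))) ?_
      rcases Nat.lt_or_ge (u : ℕ) k with huk | huk
      · exact ⟨i, Finset.mem_univ i, mul_pos (hdiag t i) (h2 i (s u) ⟨u, huk, rfl⟩)⟩
      · have hut : u = t := by
          apply Fin.ext
          simp only [htdef, Fin.val_mk]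
          omega
        subst hut
        by_cases hi : i = s t
        · exact ⟨i, Finset.mem_univ i, by rw [hi]; exact mul_pos (hdiag t (s t)) (h1 (s t))⟩
        · exact ⟨s t, Finset.mem_univ _, mul_pos (hcol t i hi) (h1 (s t))⟩

/-- If `M 0, …, M (ℓ-1)` are nonnegative `n × n` matrices, each with positive
diagonal and off-diagonal nonzero entries confined to a single column `s k`,
where all the off-diagonal entries of column `s k` are positive, and the
columns `s k` cover all of `{1, …, n}`, then the product
`M (ℓ-1) ⋯ M 0` has all entries strictly positive. -/
theorem stmt_16 (n ℓ : ℕ) (hn : 0 < n)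
    (M : Fin ℓ → Matrix (Fin n) (Fin n) ℝ) (s : Fin ℓ → Fin n)
    (hnonneg : ∀ k i j, 0 ≤ M k i j)
    (hdiag : ∀ k i, 0 < M k i i)
    (hzero : ∀ k i j, j ≠ i → j ≠ s k → M k i j = 0)
    (hcol : ∀ k i, i ≠ s k → 0 < M k i (s k))
    (hsurj : ∀ j : Fin n, ∃ k, s k = j) :
    ∀ i j, 0 < ((List.ofFn M).reverse.prod) i j := by
  intro i j
  obtain ⟨-, -, h2⟩ := stmt_16_aux n ℓ M s hnonneg hdiag hcol ℓ le_rfl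
  have htake : (List.ofFn M).take ℓ = List.ofFn M := by
    apply List.take_of_length_le; simp
  obtain ⟨k, hk⟩ := hsurj j
  have := h2 i j ⟨k, k.isLt, hk⟩
  rwa [htake] at this
end
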